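/- Suppose f, g : (α, β) → (0, ∞) satisfy, for a fixed x₁ ∈ (α, β), (d⁺f/dp)(x) = a + r ∫_{(x₁, x]} f dm and (d⁺g/dp)(x) = b + s ∫_{(x₁, x]} g dm for all x ∈ [x₁, β), where a, b ∈ ℝ, s > r > 0, and m is a measure on (α, β) with ∫_{(x₁, x]} g dm → ∞ as x → β⁻. If lim_{x→β⁻} f(x)/g(x) = L ∈ [0, ∞) exists and lim_{x→β⁻} (d⁺f/dp)(x)/(d⁺g/dp)(x) = L as well, then L = (r/s)·L, and therefore L = 0. -/

import Mathlib

/-!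
Near `β` the function `f - L g` is `o(g)` with `g > 0`, so, since `∫_{(x₁,x]} g dm` diverges,
`∫_{(x₁,x]} (f - L g) dm = o(∫_{(x₁,x]} g dm)` (an integral Stolz–Cesàro argument: the
contribution of a fixed initial piece is swamped). Hence `∫ f dm / ∫ g dm → L`, so the ratio
`(a + r ∫ f dm) / (b + s ∫ g dm)` of the right derivatives tends to `r L / s`. By uniqueness of
limits `L = (r / s) L`, and `r ≠ s` forces `L = 0`.
-/

open Filter Set Topology MeasureTheory
open scoped ENNReal

/-- The filter of real numbers tending to the (possibly infinite) extended-real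
endpoint `b` from the left. -/
noncomputable def leftLimFilter (b : EReal) : Filter ℝ :=
  Filter.comap (fun x : ℝ => (x : EReal)) (nhdsWithin b (Set.Iio b))

open Asymptotics

theorem leftLimFilter_hasBasis {β : EReal} (hβ : β ≠ ⊥) :
    (leftLimFilter β).HasBasis (fun c : ℝ => (c : EReal) < β)
      (fun c => {x : ℝ | c < x ∧ (x : EReal) < β}) := by
  refine ((nhdsLT_basis_of_exists_lt ⟨⊥, bot_lt_iff_ne_bot.2 hβ⟩).comap _).to_hasBasis
    (fun c hc => ?_) (fun c hc => ⟨c, hc, fun x hx => ⟨EReal.coe_lt_coe_iff.1 hx.1, hx.2⟩⟩)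
  obtain ⟨d, hcd, hdβ⟩ := EReal.exists_between_coe_real hc
  exact ⟨d, hdβ, fun x hx => ⟨hcd.trans (EReal.coe_lt_coe_iff.2 hx.1), hx.2⟩⟩

theorem leftLimFilter_neBot {β : EReal} (hβ : β ≠ ⊥) : (leftLimFilter β).NeBot :=
  (leftLimFilter_hasBasis hβ).neBot_iff.2 fun {c} hc => by
    obtain ⟨x, hcx, hxβ⟩ := EReal.exists_between_coe_real hc
    exact ⟨x, EReal.coe_lt_coe_iff.1 hcx, hxβ⟩

theorem eventually_gt_leftLimFilter {β : EReal} {c : ℝ} (hc : (c : EReal) < β) :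
    ∀ᶠ x in leftLimFilter β, c < x :=
  Filter.mem_of_superset ((leftLimFilter_hasBasis hc.ne_bot).mem_of_mem hc) fun _ hx => hx.1

theorem eventually_lt_leftLimFilter (β : EReal) :
    ∀ᶠ x : ℝ in leftLimFilter β, (x : EReal) < β :=
  preimage_mem_comap self_mem_nhdsWithin

theorem isLittleO_of_forall_le_add_mul {α : Type*} {l : Filter α} {u v : α → ℝ}
    (hv : Tendsto v l atTop) (h : ∀ ε > 0, ∃ K, ∀ᶠ x in l, |u x| ≤ K + ε * v x) :
    u =o[l] v := by
  refine isLittleO_iff.2 fun ε hε => ?_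
  obtain ⟨K, hK⟩ := h (ε / 2) (half_pos hε)
  filter_upwards [hK, hv.eventually_ge_atTop (2 * K / ε), hv.eventually_ge_atTop 0]
    with x hux hvK hv0
  rw [Real.norm_eq_abs, Real.norm_eq_abs, abs_of_nonneg hv0]
  have hKv : 2 * K ≤ v x * ε := (div_le_iff₀ hε).1 hvK
  linarith

theorem setIntegral_Ioc_eq_add {E : Type*} [NormedAddCommGroup E] [NormedSpace ℝ E]
    {m : Measure ℝ} {f : ℝ → E} {a b c : ℝ} (hab : a ≤ b) (hbc : b ≤ c)
    (hf : IntegrableOn f (Ioc a c) m) :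
    ∫ x in Ioc a c, f x ∂m = ∫ x in Ioc a b, f x ∂m + ∫ x in Ioc b c, f x ∂m := by
  rw [← Ioc_union_Ioc_eq_Ioc hab hbc, setIntegral_union (Ioc_disjoint_Ioc_of_le le_rfl)
    measurableSet_Ioc (hf.mono_set (Ioc_subset_Ioc_right hbc))
    (hf.mono_set (Ioc_subset_Ioc_left hab))]

theorem isLittleO_setIntegral_Ioc_leftLimFilter {β : EReal} {x₁ : ℝ} (hx₁β : (x₁ : EReal) < β)
    {m : Measure ℝ} {h g : ℝ → ℝ}
    (hh_int : ∀ x : ℝ, x₁ < x → (x : EReal) < β → IntegrableOn h (Ioc x₁ x) m)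
    (hg_int : ∀ x : ℝ, x₁ < x → (x : EReal) < β → IntegrableOn g (Ioc x₁ x) m)
    (hg_nonneg : ∀ᶠ x in leftLimFilter β, 0 ≤ g x)
    (hG : Tendsto (fun x => ∫ y in Ioc x₁ x, g y ∂m) (leftLimFilter β) atTop)
    (hhg : h =o[leftLimFilter β] g) :
    (fun x => ∫ y in Ioc x₁ x, h y ∂m) =o[leftLimFilter β] fun x => ∫ y in Ioc x₁ x, g y ∂m := by
  refine isLittleO_of_forall_le_add_mul hG fun ε hε => ?_
  obtain ⟨c, hcβ, hc⟩ :=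
    (leftLimFilter_hasBasis hx₁β.ne_bot).eventually_iff.1 ((hhg.bound hε).and hg_nonneg)
  set x₀ := max c x₁
  have hx₀β : (x₀ : EReal) < β := by
    rw [EReal.coe_strictMono.monotone.map_max]; exact max_lt hcβ hx₁β
  set H := fun x => ∫ y in Ioc x₁ x, h y ∂m
  set G := fun x => ∫ y in Ioc x₁ x, g y ∂m
  refine ⟨|H x₀| + ε * |G x₀|, ?_⟩
  filter_upwards [eventually_gt_leftLimFilter hx₀β, eventually_lt_leftLimFilter β]
    with x hx hxβ
  have hx₁x₀ : x₁ ≤ x₀ := le_max_right c x₁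
  have hx₁x : x₁ < x := hx₁x₀.trans_lt hx
  have hH_split : H x = H x₀ + ∫ y in Ioc x₀ x, h y ∂m :=
    setIntegral_Ioc_eq_add hx₁x₀ hx.le (hh_int x hx₁x hxβ)
  have hG_split : G x = G x₀ + ∫ y in Ioc x₀ x, g y ∂m :=
    setIntegral_Ioc_eq_add hx₁x₀ hx.le (hg_int x hx₁x hxβ)
  have hbound : |∫ y in Ioc x₀ x, h y ∂m| ≤ ε * ∫ y in Ioc x₀ x, g y ∂m := by
    rw [← Real.norm_eq_abs, ← integral_const_mul]
    refine norm_integral_le_of_norm_le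
      (((hg_int x hx₁x hxβ).mono_set (Ioc_subset_Ioc_left hx₁x₀)).const_mul ε)
      (ae_restrict_of_forall_mem measurableSet_Ioc fun y hy => ?_)
    obtain ⟨hhy, hgy⟩ := hc ⟨(le_max_left c x₁).trans_lt hy.1,
      (EReal.coe_le_coe_iff.2 hy.2).trans_lt hxβ⟩
    rwa [Real.norm_eq_abs (g y), abs_of_nonneg hgy] at hhy
  change |H x| ≤ _ + ε * G x
  rw [hH_split, hG_split]
  linarith [abs_add_le (H x₀) (∫ y in Ioc x₀ x, h y ∂m),
    mul_le_mul_of_nonneg_left (neg_abs_le (G x₀)) hε.le]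

theorem tendsto_setIntegral_Ioc_div_leftLimFilter {β : EReal} {x₁ : ℝ}
    (hx₁β : (x₁ : EReal) < β) {m : Measure ℝ} {f g : ℝ → ℝ}
    (hf_int : ∀ x : ℝ, x₁ < x → (x : EReal) < β → IntegrableOn f (Ioc x₁ x) m)
    (hg_int : ∀ x : ℝ, x₁ < x → (x : EReal) < β → IntegrableOn g (Ioc x₁ x) m)
    (hg_pos : ∀ᶠ x in leftLimFilter β, 0 < g x)
    (hG : Tendsto (fun x => ∫ y in Ioc x₁ x, g y ∂m) (leftLimFilter β) atTop) {L : ℝ}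
    (hfg : Tendsto (fun x => f x / g x) (leftLimFilter β) (𝓝 L)) :
    Tendsto (fun x => (∫ y in Ioc x₁ x, f y ∂m) / ∫ y in Ioc x₁ x, g y ∂m)
      (leftLimFilter β) (𝓝 L) := by
  have hrem : (fun x => f x - L * g x) =o[leftLimFilter β] g := by
    refine (isLittleO_iff_tendsto' (hg_pos.mono fun x hx h0 => absurd h0 hx.ne')).2 ?_
    refine (sub_self L ▸ hfg.sub_const L).congr' ?_
    filter_upwards [hg_pos] with x hx
    field_simp
  have hrem_int := isLittleO_setIntegral_Ioc_leftLimFilter (h := fun x => f x - L * g x) hx₁β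
    (fun x hx hxβ => (hf_int x hx hxβ).sub ((hg_int x hx hxβ).const_mul L)) hg_int
    (hg_pos.mono fun _ => le_of_lt) hG hrem
  refine (zero_add L ▸ hrem_int.tendsto_div_nhds_zero.add_const L).congr' ?_
  filter_upwards [hG.eventually_gt_atTop 0, eventually_gt_leftLimFilter hx₁β,
    eventually_lt_leftLimFilter β] with x hGx hx hxβ
  rw [integral_sub (hf_int x hx hxβ) ((hg_int x hx hxβ).const_mul L), integral_const_mul]
  field_simp
  ring

theorem tendsto_add_mul_div_add_mul {α : Type*} {l : Filter α} {F G : α → ℝ} {L : ℝ}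
    (a b r : ℝ) {s : ℝ} (hs : s ≠ 0) (hG : Tendsto G l atTop)
    (hFG : Tendsto (fun x => F x / G x) l (𝓝 L)) :
    Tendsto (fun x => (a + r * F x) / (b + s * G x)) l (𝓝 (r * L / s)) := by
  have hlim : Tendsto (fun x => (a / G x + r * (F x / G x)) / (b / G x + s)) l
      (𝓝 ((0 + r * L) / (0 + s))) :=
    ((tendsto_const_nhds.div_atTop hG).add (hFG.const_mul r)).div
      ((tendsto_const_nhds.div_atTop hG).add tendsto_const_nhds) (by simpa using hs)
  simp only [zero_add] at hlim
  refine hlim.congr' ?_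
  filter_upwards [hG.eventually_gt_atTop 0] with x hx
  field_simp

theorem natural_boundary_ratio_vanishes_general
    (α β : EReal) (x₁ : ℝ) (hx₁α : α < (x₁ : EReal)) (hx₁β : (x₁ : EReal) < β)
    (f g Df Dg : ℝ → ℝ) (m : Measure ℝ)
    (a b r s : ℝ) (hr : 0 < r) (hrs : r < s)
    (hg_pos : ∀ x : ℝ, α < (x : EReal) → (x : EReal) < β → 0 < g x)
    (hf_int : ∀ x : ℝ, x₁ < x → (x : EReal) < β → IntegrableOn f (Set.Ioc x₁ x) m)
    (hg_int : ∀ x : ℝ, x₁ < x → (x : EReal) < β → IntegrableOn g (Set.Ioc x₁ x) m)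
    (hDf : ∀ x : ℝ, x₁ ≤ x → (x : EReal) < β →
      Df x = a + r * ∫ y in Set.Ioc x₁ x, f y ∂m)
    (hDg : ∀ x : ℝ, x₁ ≤ x → (x : EReal) < β →
      Dg x = b + s * ∫ y in Set.Ioc x₁ x, g y ∂m)
    (hg_top : Tendsto (fun x => ∫ y in Set.Ioc x₁ x, g y ∂m) (leftLimFilter β) atTop)
    (L : ℝ)
    (hL : Tendsto (fun x => f x / g x) (leftLimFilter β) (nhds L))
    (hL' : Tendsto (fun x => Df x / Dg x) (leftLimFilter β) (nhds L)) :
    L = (r / s) * L ∧ L = 0 := by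
  have hs : 0 < s := hr.trans hrs
  have : (leftLimFilter β).NeBot := leftLimFilter_neBot hx₁β.ne_bot
  have hg_pos' : ∀ᶠ x in leftLimFilter β, 0 < g x := by
    filter_upwards [eventually_gt_leftLimFilter hx₁β, eventually_lt_leftLimFilter β] with x hx hxβ
    exact hg_pos x (hx₁α.trans (EReal.coe_lt_coe_iff.2 hx)) hxβ
  have hFG := tendsto_setIntegral_Ioc_div_leftLimFilter hx₁β hf_int hg_int hg_pos' hg_top hL
  have hD : Tendsto (fun x => Df x / Dg x) (leftLimFilter β) (𝓝 (r * L / s)) := by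
    refine (tendsto_add_mul_div_add_mul a b r hs.ne' hg_top hFG).congr' ?_
    filter_upwards [eventually_gt_leftLimFilter hx₁β, eventually_lt_leftLimFilter β] with x hx hxβ
    rw [hDf x hx.le hxβ, hDg x hx.le hxβ]
  have hL_eq : L = r / s * L := div_mul_eq_mul_div r s L ▸ tendsto_nhds_unique hL' hD
  have hrs_ne : r / s ≠ 1 := by rw [ne_eq, div_eq_one_iff_eq hs.ne']; exact hrs.ne
  have hL_fixed : (1 - r / s) * L = 0 := by rw [sub_mul, one_mul, ← hL_eq, sub_self]
  exact ⟨hL_eq, (mul_eq_zero.1 hL_fixed).resolve_left (sub_ne_zero.2 hrs_ne.symm)⟩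

/-- Final step of the natural-boundary argument: suppose `f, g : (α, β) → (0, ∞)` satisfy,
for a fixed `x₁ ∈ (α, β)`, `(d⁺f/dp)(x) = a + r ∫_{(x₁,x]} f dm` and
`(d⁺g/dp)(x) = b + s ∫_{(x₁,x]} g dm` on `[x₁, β)`, with `s > r > 0` and
`∫_{(x₁,x]} g dm → ∞` as `x → β⁻`. If `f/g → L ∈ [0, ∞)` and `(d⁺f/dp)/(d⁺g/dp) → L`
at `β⁻`, then `L = (r/s) L` and therefore `L = 0`. -/
theorem natural_boundary_ratio_vanishes
    (α β : EReal) (x₁ : ℝ) (hx₁α : α < (x₁ : EReal)) (hx₁β : (x₁ : EReal) < β)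
    (f g Df Dg : ℝ → ℝ) (m : Measure ℝ)
    (a b r s : ℝ) (hr : 0 < r) (hrs : r < s)
    (hf_pos : ∀ x : ℝ, α < (x : EReal) → (x : EReal) < β → 0 < f x)
    (hg_pos : ∀ x : ℝ, α < (x : EReal) → (x : EReal) < β → 0 < g x)
    (hf_meas : Measurable f) (hg_meas : Measurable g)
    (hf_int : ∀ x : ℝ, x₁ < x → (x : EReal) < β → IntegrableOn f (Set.Ioc x₁ x) m)
    (hg_int : ∀ x : ℝ, x₁ < x → (x : EReal) < β → IntegrableOn g (Set.Ioc x₁ x) m)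
    (hDf : ∀ x : ℝ, x₁ ≤ x → (x : EReal) < β →
      Df x = a + r * ∫ y in Set.Ioc x₁ x, f y ∂m)
    (hDg : ∀ x : ℝ, x₁ ≤ x → (x : EReal) < β →
      Dg x = b + s * ∫ y in Set.Ioc x₁ x, g y ∂m)
    (hg_top : Tendsto (fun x => ∫ y in Set.Ioc x₁ x, g y ∂m) (leftLimFilter β) atTop)
    (L : ℝ) (hL0 : 0 ≤ L)
    (hL : Tendsto (fun x => f x / g x) (leftLimFilter β) (nhds L))
    (hL' : Tendsto (fun x => Df x / Dg x) (leftLimFilter β) (nhds L)) :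
    L = (r / s) * L ∧ L = 0 :=
  natural_boundary_ratio_vanishes_general α β x₁ hx₁α hx₁β f g Df Dg m a b r s hr hrs hg_pos hf_int
    hg_int hDf hDg hg_top L hL hL'
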